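/- Let $G$ be a graph with an odd number $n$ of vertices, and let $H$ be obtained from $G$ by subdividing every edge of $G$ exactly twice. Then $H$ has an induced cycle of odd length at least $3n$ if and only if $G$ has a Hamilton cycle. -/

import Mathlib

open SimpleGraph

namespace LOH

variable {V : Type*}

/-- A hole: an induced cycle. -/
def IsInducedCycle (G : SimpleGraph V) {v : V} (c : G.Walk v v) : Prop :=
  c.IsCycle ∧ ∀ x y : V, x ∈ c.support → y ∈ c.support → G.Adj x y → s(x, y) ∈ c.edges

/-- An induced path. -/
def IsInducedPath (G : SimpleGraph V) {u v : V} (p : G.Walk u v) : Prop :=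
  p.IsPath ∧ ∀ x y : V, x ∈ p.support → y ∈ p.support → G.Adj x y → s(x, y) ∈ p.edges

/-- A long odd hole: an induced cycle of odd length at least `ℓ`. -/
def IsLongOddHole (G : SimpleGraph V) (ℓ : ℕ) {v : V} (c : G.Walk v v) : Prop :=
  IsInducedCycle G c ∧ ℓ ≤ c.length ∧ Odd c.length

/-- A shortest long odd hole. -/
def IsShortestLongOddHole (G : SimpleGraph V) (ℓ : ℕ) {v : V} (c : G.Walk v v) : Prop :=
  IsLongOddHole G ℓ c ∧ ∀ (w : V) (d : G.Walk w w), IsLongOddHole G ℓ d → c.length ≤ d.length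

/-- The interior of a path: its vertices other than the two ends. -/
def interiorSet {G : SimpleGraph V} {u v : V} (p : G.Walk u v) : Set V :=
  {x | x ∈ p.support ∧ x ≠ u ∧ x ≠ v}

/-- `x` is `C`-major if no three-vertex subpath of `C` contains all neighbours of `x` in `V(C)`. -/
def CMajor (G : SimpleGraph V) {v : V} (c : G.Walk v v) (x : V) : Prop :=
  x ∉ c.support ∧
    ¬ ∃ a b d : V, s(a, b) ∈ c.edges ∧ s(b, d) ∈ c.edges ∧ a ≠ d ∧
      ∀ y : V, y ∈ c.support → G.Adj x y → y = a ∨ y = b ∨ y = d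

/-- A hole is clean if there are no `C`-major vertices. -/
def IsClean (G : SimpleGraph V) {v : V} (c : G.Walk v v) : Prop :=
  ∀ x : V, ¬ CMajor G c x

/-- `p` is a subpath of the closed walk `c`. -/
def IsSubpath (G : SimpleGraph V) {v a b : V} (c : G.Walk v v) (p : G.Walk a b) : Prop :=
  p.IsPath ∧ (∀ x ∈ p.support, x ∈ c.support) ∧ ∀ e ∈ p.edges, e ∈ c.edges

/-- A long pyramid with apex `v0`, base `{v1,v2,v3}`, formed by `P1,P2,P3`. -/
def IsLongPyramid (G : SimpleGraph V) (ℓ : ℕ) {v0 v1 v2 v3 : V}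
    (P1 : G.Walk v0 v1) (P2 : G.Walk v0 v2) (P3 : G.Walk v0 v3) : Prop :=
  P1.IsPath ∧ P2.IsPath ∧ P3.IsPath ∧
  v1 ≠ v0 ∧ v2 ≠ v0 ∧ v3 ≠ v0 ∧
  G.Adj v1 v2 ∧ G.Adj v1 v3 ∧ G.Adj v2 v3 ∧
  (∀ x : V, x ∈ P1.support → x ∈ P2.support → x = v0) ∧
  (∀ x : V, x ∈ P1.support → x ∈ P3.support → x = v0) ∧
  (∀ x : V, x ∈ P2.support → x ∈ P3.support → x = v0) ∧
  ((ℓ ≤ P1.length ∧ ℓ ≤ P2.length) ∨ (ℓ ≤ P1.length ∧ ℓ ≤ P3.length) ∨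
    (ℓ ≤ P2.length ∧ ℓ ≤ P3.length)) ∧
  (∀ x y : V, x ∈ P1.support → x ≠ v0 → y ∈ P2.support → y ≠ v0 → G.Adj x y →
      x = v1 ∧ y = v2) ∧
  (∀ x y : V, x ∈ P1.support → x ≠ v0 → y ∈ P3.support → y ≠ v0 → G.Adj x y →
      x = v1 ∧ y = v3) ∧
  (∀ x y : V, x ∈ P2.support → x ≠ v0 → y ∈ P3.support → y ≠ v0 → G.Adj x y →
      x = v2 ∧ y = v3)

def HasLongPyramid (G : SimpleGraph V) (ℓ : ℕ) : Prop :=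
  ∃ (v0 v1 v2 v3 : V) (P1 : G.Walk v0 v1) (P2 : G.Walk v0 v2) (P3 : G.Walk v0 v3),
    IsLongPyramid G ℓ P1 P2 P3

/-- A long jewel formed by `Q1, Q2, P`. -/
def IsLongJewel (G : SimpleGraph V) (ℓ : ℕ) {u v : V} (Q1 Q2 P : G.Walk u v) : Prop :=
  Q1.IsPath ∧ Q2.IsPath ∧ P.IsPath ∧
  ¬ (Q1.length % 2 = Q2.length % 2) ∧
  ℓ ≤ P.length ∧
  ∀ x ∈ interiorSet P, ∀ y ∈ interiorSet Q1 ∪ interiorSet Q2, x ≠ y ∧ ¬ G.Adj x y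

def HasLongJewelOfOrderLE (G : SimpleGraph V) (ℓ k : ℕ) : Prop :=
  ∃ (u v : V) (Q1 Q2 P : G.Walk u v), IsLongJewel G ℓ Q1 Q2 P ∧
    max (Q1.length + 1) (Q2.length + 1) ≤ k

/-- A candidate: no long pyramid, no long jewel of order at most `ℓ+2`, and no long odd
hole of length at most `2ℓ+2`. -/
def Candidate (G : SimpleGraph V) (ℓ : ℕ) : Prop :=
  ¬ HasLongPyramid G ℓ ∧ ¬ HasLongJewelOfOrderLE G ℓ (ℓ + 2) ∧
  ¬ ∃ (v : V) (c : G.Walk v v), IsLongOddHole G ℓ c ∧ c.length ≤ 2 * ℓ + 2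

/-- A `(u,w)`-gap: a subpath `p` of `c` whose vertex set is the interior of an
induced path of `G` between `u` and `w`. -/
def IsGap (G : SimpleGraph V) {v a b : V} (c : G.Walk v v) (u w : V)
    (p : G.Walk a b) : Prop :=
  IsSubpath G c p ∧
    ∃ (q : G.Walk u w), IsInducedPath G q ∧ {x : V | x ∈ p.support} = interiorSet q

/-- Two vertex sets are anticomplete: disjoint, with no edges between them. -/
def Anticomplete (G : SimpleGraph V) (A B : Set V) : Prop :=
  Disjoint A B ∧ ∀ a ∈ A, ∀ b ∈ B, ¬ G.Adj a b

/-- Distance between two vertices measured inside the cycle `c`. -/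
noncomputable def cycleDist (G : SimpleGraph V) {v : V} (c : G.Walk v v) (a b : V) : ℕ :=
  sInf {n | ∃ (p : G.Walk a b), IsSubpath G c p ∧ p.length = n}

/-- A base `(x, D)` for the hole `c`. -/
def IsBase (G : SimpleGraph V) {v d1 d2 : V} (c : G.Walk v v) (x : V)
    (D : G.Walk d1 d2) : Prop :=
  CMajor G c x ∧ IsSubpath G c D ∧ G.Adj x d1 ∧ G.Adj x d2 ∧
  (∀ y ∈ interiorSet D, ¬ G.Adj x y) ∧
  (∀ (e1 e2 : V) (D' : G.Walk e1 e2), IsSubpath G c D' →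
      (∀ e ∈ D.edges, e ∈ D'.edges) → G.Adj x e1 → G.Adj x e2 →
      (∀ y ∈ interiorSet D', ¬ G.Adj x y) → ∀ e ∈ D'.edges, e ∈ D.edges)

/-- A remote base. -/
def IsRemoteBase (G : SimpleGraph V) (ℓ : ℕ) {v d1 d2 : V} (c : G.Walk v v) (x : V)
    (D : G.Walk d1 d2) : Prop :=
  IsBase G c x D ∧ 2 * ℓ ≤ D.length ∧
  ∀ y : V, CMajor G c y → y ≠ x → ∀ w ∈ c.support, G.Adj y w →
    ℓ ≤ cycleDist G c w d1 ∧ ℓ ≤ cycleDist G c w d2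


/-- The graph obtained from `G` by subdividing every edge exactly twice: each
edge `uv` is replaced by a path `u - w₁ - w₂ - v` of length three, where the new
internal vertices `w₁, w₂` have degree two. The new vertex associated to the
endpoint `u` of the edge `e = uv` is `⟨e, u⟩`. -/
def subdivide2 {V : Type*} (G : SimpleGraph V) :
    SimpleGraph (V ⊕ (Σ e : G.edgeSet, {x : V // x ∈ (e : Sym2 V)})) where
  Adj x y :=
    match x, y with
    | Sum.inl u, Sum.inr ⟨_, z⟩ => u = z.1
    | Sum.inr ⟨_, z⟩, Sum.inl u => u = z.1
    | Sum.inr ⟨e, z⟩, Sum.inr ⟨f, z'⟩ => e = f ∧ z.1 ≠ z'.1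
    | Sum.inl _, Sum.inl _ => False
  symm := by
    constructor
    rintro (u | ⟨e, z⟩) (w | ⟨f, z'⟩) h
    · exact h.elim
    · exact h.symm ▸ rfl
    · exact h ▸ rfl
    · exact ⟨h.1.symm, h.2.symm⟩
  loopless := by
    constructor
    rintro (u | ⟨e, z⟩) h
    · exact h
    · exact h.2 rfl

/-!
A trail of `subdivide2 G` between two original vertices cannot turn back inside a subdivided
edge, so it is the image `subdivide2Walk q` of a walk `q` of `G`, three times as long; `q` is a
cycle exactly when its image is, and the image of a cycle is induced because subdivision vertices
have degree two and no two original vertices are adjacent. Every cycle of the subdivision passes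
through an original vertex, so one of length at least `3n` comes from a cycle of `G` of length at
least `n`, i.e. a Hamilton cycle. Conversely a Hamilton cycle of `G` gives an induced cycle of
length `3n`, odd since `n` is.
-/

open Sum Walk

variable {G : SimpleGraph V} {u v : V} {x y z : Σ e : G.edgeSet, {x : V // x ∈ (e : Sym2 V)}}

@[simp] lemma subdivide2_adj_inl_inr : (subdivide2 G).Adj (inl u) (inr x) ↔ u = x.2 := Iff.rfl

@[simp] lemma subdivide2_adj_inr_inl : (subdivide2 G).Adj (inr x) (inl u) ↔ u = x.2 := Iff.rfl

@[simp] lemma subdivide2_adj_inr_inr :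
    (subdivide2 G).Adj (inr x) (inr y) ↔ x.1 = y.1 ∧ (x.2 : V) ≠ y.2 := Iff.rfl

lemma eq_or_eq_of_coe_fst_eq {h : G.Adj u v} (hx : (x.1 : Sym2 V) = s(u, v)) :
    x = ⟨⟨s(u, v), h⟩, ⟨u, Sym2.mem_mk_left u v⟩⟩ ∨
      x = ⟨⟨s(u, v), h⟩, ⟨v, Sym2.mem_mk_right u v⟩⟩ := by
  obtain ⟨⟨e, he⟩, ⟨y, hy⟩⟩ := x
  subst hx
  rcases Sym2.mem_iff.mp hy with rfl | rfl <;> simp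

lemma eq_of_subdivide2_adj_inr_inr (hxy : (subdivide2 G).Adj (inr x) (inr y))
    (hyz : (subdivide2 G).Adj (inr y) (inr z)) : x = z := by
  obtain ⟨e, ⟨a, ha⟩⟩ := x
  obtain ⟨f, ⟨b, hb⟩⟩ := y
  obtain ⟨g, ⟨c, hc⟩⟩ := z
  obtain ⟨rfl, hab⟩ := hxy
  obtain ⟨rfl, hbc⟩ := hyz
  have hac : s(a, b) = s(c, b) :=
    ((Sym2.mem_and_mem_iff hab).mp ⟨ha, hb⟩).symm.trans
      ((Sym2.mem_and_mem_iff hbc.symm).mp ⟨hc, hb⟩)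
  obtain rfl := Sym2.congr_left.mp hac
  rfl

def subdivide2Walk : {u v : V} → G.Walk u v → (subdivide2 G).Walk (inl u) (inl v)
  | _, _, nil => nil
  | _, _, cons (u := u) (v := w) h p =>
    cons (subdivide2_adj_inl_inr (x := ⟨⟨s(u, w), h⟩, ⟨u, Sym2.mem_mk_left u w⟩⟩).mpr rfl) <|
      cons (subdivide2_adj_inr_inr (y := ⟨⟨s(u, w), h⟩, ⟨w, Sym2.mem_mk_right u w⟩⟩).mpr
          ⟨rfl, h.ne⟩) <|
        cons (subdivide2_adj_inr_inl.mpr rfl) (subdivide2Walk p)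

@[simp] lemma length_subdivide2Walk (p : G.Walk u v) :
    (subdivide2Walk p).length = 3 * p.length := by
  induction p with
  | nil => rfl
  | cons h p ih => simp only [subdivide2Walk, length_cons, ih]; ring

@[simp] lemma inl_mem_support_subdivide2Walk {p : G.Walk u v} {a : V} :
    inl a ∈ (subdivide2Walk p).support ↔ a ∈ p.support := by
  induction p with
  | nil => simp [subdivide2Walk]
  | cons h p ih => simp [subdivide2Walk, ih]

@[simp] lemma inr_mem_support_subdivide2Walk {p : G.Walk u v} :
    inr x ∈ (subdivide2Walk p).support ↔ (x.1 : Sym2 V) ∈ p.edges := by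
  induction p with
  | nil => simp [subdivide2Walk]
  | @cons a b _ h p ih =>
    by_cases hx : (x.1 : Sym2 V) = s(a, b)
    · rcases eq_or_eq_of_coe_fst_eq (h := h) hx with rfl | rfl <;> simp [subdivide2Walk]
    · have hne (y) : x ≠ ⟨⟨s(a, b), h⟩, y⟩ := by rintro rfl; exact hx rfl
      simp [subdivide2Walk, ih, hne, hx]

@[simp] lemma isPath_subdivide2Walk_iff {p : G.Walk u v} :
    (subdivide2Walk p).IsPath ↔ p.IsPath := by
  induction p with
  | nil => simp [subdivide2Walk]
  | @cons a b _ h p ih =>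
    have hab : a ∉ p.support → s(a, b) ∉ p.edges := fun ha he ↦
      ha (p.fst_mem_support_of_mem_edges he)
    simp +contextual [subdivide2Walk, ih, h.ne, hab]

@[simp] lemma isCycle_subdivide2Walk_iff {p : G.Walk u u} :
    (subdivide2Walk p).IsCycle ↔ p.IsCycle := by
  cases p with
  | nil => simp [subdivide2Walk]
  | @cons _ b _ h p =>
    simp only [subdivide2Walk, cons_isCycle_iff, cons_isPath_iff, isPath_subdivide2Walk_iff,
      support_cons, List.mem_cons, inr_mem_support_subdivide2Walk, edges_cons]
    refine ⟨fun hc ↦ hc.1.1, fun ⟨hp, hub⟩ ↦ ⟨⟨⟨hp, hub⟩, ?_⟩, ?_⟩⟩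
    · simp [h.ne, hub]
    · rintro (h' | h' | hmem)
      · simp at h'
      · simp [h.ne] at h'
      · exact hub (by simpa using (subdivide2Walk p).snd_mem_support_of_mem_edges hmem)

lemma mem_edges_subdivide2Walk_of_adj {p : G.Walk u v} (hx : (x.1 : Sym2 V) ∈ p.edges)
    {w : V ⊕ Σ e : G.edgeSet, {x : V // x ∈ (e : Sym2 V)}} (hxw : (subdivide2 G).Adj (inr x) w) :
    s(inr x, w) ∈ (subdivide2Walk p).edges := by
  induction p with
  | nil => simp at hx
  | @cons a b _ h p ih =>
    by_cases hab : (x.1 : Sym2 V) = s(a, b)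
    · clear ih
      rcases eq_or_eq_of_coe_fst_eq (h := h) hab with rfl | rfl <;>
        rcases w with w | ⟨f, ⟨c, hc⟩⟩
      · obtain rfl := subdivide2_adj_inr_inl.mp hxw
        simp [subdivide2Walk]
      · obtain ⟨rfl, hne⟩ := subdivide2_adj_inr_inr.mp hxw
        rcases Sym2.mem_iff.mp hc with rfl | rfl
        · exact absurd rfl hne
        · simp [subdivide2Walk]
      · obtain rfl := subdivide2_adj_inr_inl.mp hxw
        simp [subdivide2Walk]
      · obtain ⟨rfl, hne⟩ := subdivide2_adj_inr_inr.mp hxw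
        rcases Sym2.mem_iff.mp hc with rfl | rfl
        · simp [subdivide2Walk]
        · exact absurd rfl hne
    · simp only [edges_cons, List.mem_cons, hab, false_or] at hx
      simp [subdivide2Walk, ih hx]

lemma isInducedCycle_subdivide2Walk {p : G.Walk u u} (hp : p.IsCycle) :
    IsInducedCycle (subdivide2 G) (subdivide2Walk p) := by
  refine ⟨isCycle_subdivide2Walk_iff.mpr hp, ?_⟩
  rintro (x | x) y hx hy hxy
  · rcases y with y | y
    · exact hxy.elim
    · rw [Sym2.eq_swap]
      exact mem_edges_subdivide2Walk_of_adj (inr_mem_support_subdivide2Walk.mp hy) hxy.symm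
  · exact mem_edges_subdivide2Walk_of_adj (inr_mem_support_subdivide2Walk.mp hx) hxy

theorem exists_subdivide2Walk_eq_of_isTrail :
    ∀ {u v : V} (p : (subdivide2 G).Walk (inl u) (inl v)), p.IsTrail →
      ∃ q : G.Walk u v, subdivide2Walk q = p
  | _, _, nil, _ => ⟨nil, rfl⟩
  | _, _, cons (v := inl _) h _, _ => h.elim
  | _, _, cons (v := inr x) h₁ (cons (v := inl w) h₂ p), hp => by
    obtain rfl : w = _ :=
      (subdivide2_adj_inr_inl.mp h₂).trans (subdivide2_adj_inl_inr.mp h₁).symm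
    simp [isTrail_cons, Sym2.eq_swap] at hp
  | _, _, cons (v := inr x) h₁ (cons (v := inr y) h₂ (cons (v := inr z) h₃ p)), hp => by
    obtain rfl := eq_of_subdivide2_adj_inr_inr h₂ h₃
    simp [isTrail_cons, Sym2.eq_swap] at hp
  | u, _, cons (v := inr x) h₁ (cons (v := inr y) h₂ (cons (v := inl w) h₃ p)), hp => by
    obtain ⟨q, rfl⟩ := exists_subdivide2Walk_eq_of_isTrail p hp.of_cons.of_cons.of_cons
    obtain ⟨⟨e, he⟩, ⟨a, ha⟩⟩ := x
    obtain ⟨f, ⟨b, hb⟩⟩ := y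
    obtain ⟨rfl, hab⟩ := h₂
    obtain rfl : u = a := h₁
    obtain rfl : w = b := h₃
    obtain rfl : e = s(u, w) := (Sym2.mem_and_mem_iff hab).mp ⟨ha, hb⟩
    exact ⟨cons he q, rfl⟩

lemma exists_inl_mem_support_of_isCycle :
    ∀ {v : V ⊕ Σ e : G.edgeSet, {x : V // x ∈ (e : Sym2 V)}} {c : (subdivide2 G).Walk v v},
      c.IsCycle → ∃ a : V, inl a ∈ c.support
  | inl a, c, _ => ⟨a, c.start_mem_support⟩
  | inr _, cons (v := inl a) _ _, _ => ⟨a, by simp⟩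
  | inr _, cons (v := inr _) h nil, _ => (h.ne rfl).elim
  | inr _, cons (v := inr _) _ (cons (v := inl a) _ _), _ => ⟨a, by simp⟩
  | inr _, cons (v := inr _) h₁ (cons (v := inr _) h₂ c), hc => by
    obtain rfl := eq_of_subdivide2_adj_inr_inr h₁ h₂
    have hnil : c.Nil := isPath_iff_nil.mp (cons_isCycle_iff _ h₁ |>.mp hc).1.of_cons
    simpa [hnil.length_eq_zero] using hc.three_le_length

lemma _root_.SimpleGraph.Walk.IsCycle.length_le_card [Fintype V] {p : G.Walk u u}
    (hp : p.IsCycle) : p.length ≤ Fintype.card V := by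
  have := hp.isPath_tail.length_lt
  have := length_tail_add_one hp.not_nil
  omega

lemma exists_isCycle_three_mul_length_eq [DecidableEq V]
    {v : V ⊕ Σ e : G.edgeSet, {x : V // x ∈ (e : Sym2 V)}} {c : (subdivide2 G).Walk v v}
    (hc : c.IsCycle) : ∃ (a : V) (d : G.Walk a a), d.IsCycle ∧ 3 * d.length = c.length := by
  obtain ⟨a, ha⟩ := exists_inl_mem_support_of_isCycle hc
  obtain ⟨d, hd⟩ := exists_subdivide2Walk_eq_of_isTrail _ (hc.rotate ha).isTrail
  refine ⟨a, d, isCycle_subdivide2Walk_iff.mp (hd ▸ hc.rotate ha), ?_⟩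
  rw [← length_subdivide2Walk, hd, length_rotate]

theorem stmt_3 {V : Type*} [Fintype V] [DecidableEq V] (G : SimpleGraph V)
    (hodd : Odd (Fintype.card V)) :
    (∃ (v : V ⊕ (Σ e : G.edgeSet, {x : V // x ∈ (e : Sym2 V)}))
        (c : (subdivide2 G).Walk v v),
        IsInducedCycle (subdivide2 G) c ∧ Odd c.length ∧
          3 * Fintype.card V ≤ c.length) ↔
      ∃ (v : V) (c : G.Walk v v), c.IsHamiltonianCycle := by
  constructor
  · rintro ⟨v, c, ⟨hc, -⟩, -, hlen⟩
    obtain ⟨a, d, hd, hdlen⟩ := exists_isCycle_three_mul_length_eq hc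
    exact ⟨a, d, isHamiltonianCycle_iff_isCycle_and_length_eq.mpr
      ⟨hd, le_antisymm hd.length_le_card (by omega)⟩⟩
  · rintro ⟨v, c, hc⟩
    refine ⟨inl v, subdivide2Walk c, isInducedCycle_subdivide2Walk hc.isCycle, ?_, ?_⟩
    · rw [length_subdivide2Walk, hc.length_eq]
      exact Odd.mul (by decide) hodd
    · rw [length_subdivide2Walk, hc.length_eq]

end LOH
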